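/- arXiv:1911.06296 — 3 statements merged into one kernel-verified Lean document; each statement's English description precedes it below -/
import Mathlib

section
/- Let A be a normal operator on a Hilbert space Y generating a strongly continuous semigroup with ‖e^{tA}‖ ≤ 1 for all t ≥ 0, and let a: ℂ⁻₀ → ℂ be analytic and bounded on the closed left half-plane with derivative bounds M_a^{(k)} = sup_{Re z ≤ 0} |a^{(k)}(z)|. Then for ℓ ≥ k ≥ 0 and h ≥ 0, the operator ∂_h^k(a(hA)) = A^k a^{(k)}(hA) maps Y_ℓ into Y_{ℓ−k} with ‖∂_h^k(a(hA))‖_{Y_ℓ → Y_{ℓ−k}} ≤ M_a^{(k)}. -/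
/- Statement 2: for a normal operator `A` with spectrum in the closed left half-plane
and `a` analytic and bounded there with derivative bounds `M_a^{(k)}`, the operator
`∂_h^k(a(hA)) = A^k a^{(k)}(hA)` maps `Y_ℓ` to `Y_{ℓ-k}` with norm at most `M_a^{(k)}`.
As in Statement 0, by the spectral theorem we work in the multiplication operator
model: `A` is multiplication by a measurable `φ : α → ℂ` with `Re φ ≤ 0` on `L²(μ)`,
and `A^k a^{(k)}(hA)` is multiplication by `φ^k · a^{(k)}(hφ)`. -/

open MeasureTheory Set
open scoped ENNReal

/-- The spectral projection `P_m` (multiplication by the indicator of `{|φ| ≤ m}`). -/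
noncomputable def Pm {α : Type*} (φ : α → ℂ) (m : ℝ) (U : α → ℂ) : α → ℂ :=
  ({a | ‖φ a‖ ≤ m} : Set α).indicator U

/-- The complementary projection `Q_m = id - P_m`. -/
noncomputable def Qm {α : Type*} (φ : α → ℂ) (m : ℝ) (U : α → ℂ) : α → ℂ :=
  ({a | m < ‖φ a‖} : Set α).indicator U

/-- `|A|^ℓ` as a multiplication operator. -/
noncomputable def absApow {α : Type*} (φ : α → ℂ) (ℓ : ℝ) (U : α → ℂ) : α → ℂ :=
  fun a => ((‖φ a‖ ^ ℓ : ℝ) : ℂ) * U a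

/-- The squared `Y_ℓ` norm: `‖U‖²_{Y_ℓ} = ‖P₁U‖²_Y + ‖|A|^ℓ Q₁U‖²_Y`. -/
noncomputable def YnormSq {α : Type*} [MeasurableSpace α] (μ : Measure α) (φ : α → ℂ)
    (ℓ : ℝ) (U : α → ℂ) : ℝ≥0∞ :=
  eLpNorm (Pm φ 1 U) 2 μ ^ 2 + eLpNorm (absApow φ ℓ (Qm φ 1 U)) 2 μ ^ 2

/-- The `Y_ℓ` norm. -/
noncomputable def Ynorm {α : Type*} [MeasurableSpace α] (μ : Measure α) (φ : α → ℂ)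
    (ℓ : ℝ) (U : α → ℂ) : ℝ≥0∞ :=
  YnormSq μ φ ℓ U ^ (1/2 : ℝ)

/-! In the multiplication model `∂_h^k(a(hA))` is multiplication by `g = φ^k a^{(k)}(hφ)`, and
`Re (hφ) ≤ 0` gives `|a^{(k)}(hφ)| ≤ M_a^{(k)}`. On `{|φ| ≤ 1}` this bounds `|g|` by `M_a^{(k)}`;
on `{|φ| > 1}` it bounds `|g|` by `M_a^{(k)} |φ|^k`, and the weight `|φ|^{ℓ-k}` of `Y_{ℓ-k}`
turns `|φ|^k` into the weight `|φ|^ℓ` of `Y_ℓ`. -/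

section MultiplierBounds

variable {α : Type*} [MeasurableSpace α] {μ : Measure α} {φ : α → ℂ}

theorem eLpNorm_Pm_mul_le {m M : ℝ} {g U : α → ℂ} (hg : ∀ x, ‖φ x‖ ≤ m → ‖g x‖ ≤ M)
    (p : ℝ≥0∞) :
    eLpNorm (Pm φ m fun x => g x * U x) p μ ≤ ENNReal.ofReal M * eLpNorm (Pm φ m U) p μ := by
  refine eLpNorm_le_mul_eLpNorm_of_ae_le_mul (ae_of_all _ fun x => ?_) p
  by_cases hx : ‖φ x‖ ≤ m
  · simp only [Pm, indicator_of_mem (show x ∈ {a | ‖φ a‖ ≤ m} from hx), norm_mul]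
    exact mul_le_mul_of_nonneg_right (hg x hx) (norm_nonneg _)
  · simp [Pm, indicator_of_notMem (show x ∉ {a | ‖φ a‖ ≤ m} from hx)]

theorem eLpNorm_absApow_Qm_mul_le {m M s ℓ : ℝ} {g U : α → ℂ} (hm : 0 ≤ m)
    (hg : ∀ x, m < ‖φ x‖ → ‖g x‖ ≤ M * ‖φ x‖ ^ s) (p : ℝ≥0∞) :
    eLpNorm (absApow φ (ℓ - s) (Qm φ m fun x => g x * U x)) p μ
      ≤ ENNReal.ofReal M * eLpNorm (absApow φ ℓ (Qm φ m U)) p μ := by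
  refine eLpNorm_le_mul_eLpNorm_of_ae_le_mul (ae_of_all _ fun x => ?_) p
  by_cases hx : m < ‖φ x‖
  · have hpos : 0 < ‖φ x‖ := hm.trans_lt hx
    simp only [absApow, Qm, indicator_of_mem (show x ∈ {a | m < ‖φ a‖} from hx), norm_mul,
      Complex.norm_real, Real.norm_eq_abs, abs_of_pos (Real.rpow_pos_of_pos hpos _)]
    calc ‖φ x‖ ^ (ℓ - s) * (‖g x‖ * ‖U x‖)
        ≤ ‖φ x‖ ^ (ℓ - s) * (M * ‖φ x‖ ^ s * ‖U x‖) := by gcongr; exact hg x hx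
      _ = M * (‖φ x‖ ^ ℓ * ‖U x‖) := by
        rw [Real.rpow_sub hpos]
        field_simp
  · simp [absApow, Qm, indicator_of_notMem (show x ∉ {a | m < ‖φ a‖} from hx)]

theorem Ynorm_le_of_eLpNorm_le {ℓ ℓ' : ℝ} {U V : α → ℂ} {C : ℝ≥0∞}
    (hP : eLpNorm (Pm φ 1 V) 2 μ ≤ C * eLpNorm (Pm φ 1 U) 2 μ)
    (hQ : eLpNorm (absApow φ ℓ' (Qm φ 1 V)) 2 μ ≤ C * eLpNorm (absApow φ ℓ (Qm φ 1 U)) 2 μ) :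
    Ynorm μ φ ℓ' V ≤ C * Ynorm μ φ ℓ U := by
  have hsq : YnormSq μ φ ℓ' V ≤ C ^ 2 * YnormSq μ φ ℓ U := by
    rw [YnormSq, YnormSq, mul_add, ← mul_pow, ← mul_pow]
    gcongr
  calc Ynorm μ φ ℓ' V ≤ (C ^ 2 * YnormSq μ φ ℓ U) ^ (1 / 2 : ℝ) :=
        ENNReal.rpow_le_rpow hsq (by norm_num)
    _ = C * Ynorm μ φ ℓ U := by
        rw [Ynorm, ENNReal.mul_rpow_of_nonneg _ _ (by norm_num), ← ENNReal.rpow_natCast,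
          ← ENNReal.rpow_mul]
        norm_num

theorem Ynorm_mul_le {M s ℓ : ℝ} {g : α → ℂ} (hlow : ∀ x, ‖φ x‖ ≤ 1 → ‖g x‖ ≤ M)
    (hhigh : ∀ x, 1 < ‖φ x‖ → ‖g x‖ ≤ M * ‖φ x‖ ^ s) (U : α → ℂ) :
    Ynorm μ φ (ℓ - s) (fun x => g x * U x) ≤ ENNReal.ofReal M * Ynorm μ φ ℓ U :=
  Ynorm_le_of_eLpNorm_le (eLpNorm_Pm_mul_le hlow 2) (eLpNorm_absApow_Qm_mul_le zero_le_one hhigh 2)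

end MultiplierBounds

theorem stmt2_general {α : Type*} [MeasurableSpace α] (μ : Measure α) (φ : α → ℂ)
    (hspec : ∀ x, (φ x).re ≤ 0)
    (a : ℂ → ℂ)
    (Ma : ℕ → ℝ) (hMa : ∀ (j : ℕ) (z : ℂ), z.re ≤ 0 → ‖iteratedDeriv j a z‖ ≤ Ma j)
    (ℓ : ℝ) (k : ℕ) (h : ℝ) (hh : 0 ≤ h)
    (U : α → ℂ) :
    Ynorm μ φ (ℓ - k) (fun x => (φ x) ^ k * iteratedDeriv k a (h * φ x) * U x)
      ≤ ENNReal.ofReal (Ma k) * Ynorm μ φ ℓ U := by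
  have hder : ∀ x, ‖iteratedDeriv k a (h * φ x)‖ ≤ Ma k := fun x =>
    hMa k _ (by simpa using mul_nonpos_of_nonneg_of_nonpos hh (hspec x))
  refine Ynorm_mul_le (fun x hx => ?_) (fun x hx => ?_) U
  · rw [norm_mul, norm_pow]
    calc ‖φ x‖ ^ k * ‖iteratedDeriv k a (h * φ x)‖ ≤ 1 * Ma k :=
          mul_le_mul (pow_le_one₀ (norm_nonneg _) hx) (hder x) (norm_nonneg _) zero_le_one
      _ = Ma k := one_mul _
  · rw [norm_mul, norm_pow, Real.rpow_natCast, mul_comm (Ma k)]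
    exact mul_le_mul_of_nonneg_left (hder x) (by positivity)

/-- `‖∂_h^k(a(hA)) U‖_{Y_{ℓ-k}} = ‖A^k a^{(k)}(hA) U‖_{Y_{ℓ-k}} ≤ M_a^{(k)} ‖U‖_{Y_ℓ}`
for `ℓ ≥ k ≥ 0` and `h ≥ 0`. -/
theorem stmt2 {α : Type*} [MeasurableSpace α] (μ : Measure α) (φ : α → ℂ)
    (hφ : Measurable φ) (hspec : ∀ x, (φ x).re ≤ 0)
    (a : ℂ → ℂ) (ha : ∀ z : ℂ, z.re ≤ 0 → AnalyticAt ℂ a z)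
    (Ma : ℕ → ℝ) (hMa : ∀ (j : ℕ) (z : ℂ), z.re ≤ 0 → ‖iteratedDeriv j a z‖ ≤ Ma j)
    (ℓ : ℝ) (k : ℕ) (hk : (k : ℝ) ≤ ℓ) (h : ℝ) (hh : 0 ≤ h)
    (U : α → ℂ) (hU : Measurable U) :
    Ynorm μ φ (ℓ - k) (fun x => (φ x) ^ k * iteratedDeriv k a (h * φ x) * U x)
      ≤ ENNReal.ofReal (Ma k) * Ynorm μ φ ℓ U :=
  stmt2_general μ φ hspec a Ma hMa ℓ k h hh U
end

section
/- In the setting of the contraction above, the fixed point W = W(U⁰, h) satisfies the projection-error estimate: if W_m solves the projected stage equation W_m = e^{chA}P_m U⁰ + h a(hA) P_m B(W_m) with the same bounds, U⁰ ∈ Y_ℓ with ‖U⁰‖_{Y_ℓ} ≤ R/2, B maps the R-ball of Y_ℓ into Y_ℓ with bound M_ℓ, ‖Q_m‖_{Y_ℓ → Y} ≤ m^{−ℓ} and h M_a M′ < 1, then ‖W(U⁰,h) − W_m(U⁰,h)‖_Y ≤ (m^{−ℓ} R/2 + h M_a m^{−ℓ} M_ℓ)/(1 − h M_a M′). -/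
/- The two stage equations differ by the projection error `Q_m = id − P_m`, applied to `U⁰` and
to `B(W)`, plus `P_m (B(W) − B(W_m))`. Both `U⁰` and `B(W)` lie in `Y_ℓ`, so the first two terms
are `O(m^{−ℓ})`, while the Lipschitz bound makes the last one at most `h M_a M′ ‖W − W_m‖`, which
is absorbed into the left-hand side since `h M_a M′ < 1`. -/

open Metric

lemma le_div_one_sub_of_le_add_mul {x a k : ℝ} (hk : k < 1) (hx : x ≤ a + k * x) :
    x ≤ a / (1 - k) := by
  rw [le_div_iff₀ (by linarith)]
  linarith

lemma norm_sub_le_of_stage_eq {Y : Type*} [NormedAddCommGroup Y] [NormedSpace ℝ Y]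
    {E L P : Y →L[ℝ] Y} {B : Y → Y} {U0 W Wm : Y} {h : ℝ} (hh : 0 ≤ h)
    (hWfix : W = E U0 + h • L (B W)) (hWmfix : Wm = E (P U0) + h • L (P (B Wm))) :
    ‖W - Wm‖ ≤ ‖E‖ * ‖U0 - P U0‖ + h * ‖L‖ * (‖B W - P (B W)‖ + ‖P‖ * ‖B W - B Wm‖) := by
  have hdiff : W - Wm = E (U0 - P U0) + h • L ((B W - P (B W)) + P (B W - B Wm)) := by
    conv_lhs => rw [hWfix, hWmfix]
    simp only [map_sub, map_add, smul_add, smul_sub]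
    abel
  calc ‖W - Wm‖ ≤ ‖E (U0 - P U0)‖ + h * ‖L ((B W - P (B W)) + P (B W - B Wm))‖ := by
        rw [hdiff]
        exact (norm_add_le _ _).trans_eq (by rw [norm_smul, Real.norm_of_nonneg hh])
    _ ≤ ‖E‖ * ‖U0 - P U0‖ + h * (‖L‖ * (‖B W - P (B W)‖ + ‖P‖ * ‖B W - B Wm‖)) := by
        gcongr
        · exact E.le_opNorm _
        · calc ‖L ((B W - P (B W)) + P (B W - B Wm))‖
              ≤ ‖L‖ * ‖(B W - P (B W)) + P (B W - B Wm)‖ := L.le_opNorm _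
            _ ≤ ‖L‖ * (‖B W - P (B W)‖ + ‖P‖ * ‖B W - B Wm‖) := by
              gcongr
              exact (norm_add_le _ _).trans (add_le_add le_rfl (P.le_opNorm _))
    _ = _ := by ring

theorem stmt5 {Y : Type*} [NormedAddCommGroup Y] [NormedSpace ℝ Y]
    (E L P : Y →L[ℝ] Y) (B : Y → Y) (Nℓ : Y → ℝ)
    (U0 W Wm : Y) (R h Ma Mℓ M' m ℓ : ℝ)
    (hh : 0 ≤ h) (hm : 1 ≤ m)
    (hE : ‖E‖ ≤ 1) (hL : ‖L‖ ≤ Ma) (hP : ‖P‖ ≤ 1)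
    (hQ : ∀ U : Y, ‖U - P U‖ ≤ m ^ (-ℓ) * Nℓ U)
    (hLip : ∀ x ∈ closedBall (0 : Y) R, ∀ y ∈ closedBall (0 : Y) R,
      ‖B x - B y‖ ≤ M' * ‖x - y‖)
    (hBl : ∀ U : Y, Nℓ U ≤ R → Nℓ (B U) ≤ Mℓ)
    (hU0 : Nℓ U0 ≤ R / 2)
    (hWfix : W = E U0 + h • L (B W))
    (hWmfix : Wm = E (P U0) + h • L (P (B Wm)))
    (hWball : ‖W‖ ≤ R) (hWmball : ‖Wm‖ ≤ R) (hWl : Nℓ W ≤ R)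
    (hcontr : h * Ma * M' < 1) :
    ‖W - Wm‖ ≤ (m ^ (-ℓ) * (R / 2) + h * Ma * m ^ (-ℓ) * Mℓ) / (1 - h * Ma * M') := by
  have hMa : 0 ≤ Ma := (norm_nonneg L).trans hL
  have hmℓ : 0 ≤ m ^ (-ℓ) := Real.rpow_nonneg (by linarith) _
  have hQU0 : ‖U0 - P U0‖ ≤ m ^ (-ℓ) * (R / 2) := (hQ U0).trans (by gcongr)
  have hQBW : ‖B W - P (B W)‖ ≤ m ^ (-ℓ) * Mℓ := (hQ (B W)).trans (by gcongr; exact hBl W hWl)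
  have hBdiff : ‖B W - B Wm‖ ≤ M' * ‖W - Wm‖ :=
    hLip W (mem_closedBall_zero_iff.2 hWball) Wm (mem_closedBall_zero_iff.2 hWmball)
  apply le_div_one_sub_of_le_add_mul hcontr
  calc ‖W - Wm‖
      ≤ ‖E‖ * ‖U0 - P U0‖ + h * ‖L‖ * (‖B W - P (B W)‖ + ‖P‖ * ‖B W - B Wm‖) :=
        norm_sub_le_of_stage_eq hh hWfix hWmfix
    _ ≤ 1 * (m ^ (-ℓ) * (R / 2)) + h * Ma * (m ^ (-ℓ) * Mℓ + 1 * (M' * ‖W - Wm‖)) := by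
        gcongr
    _ = _ := by ring
end

section
/- Consider the linear ODE/PDE u̇ = Au + Bu with A skew-adjoint satisfying A e_k = ik e_k (‖e_k‖ = 1, k ∈ ℤ) and B commuting with A, B e_k = λ_k e_k. Apply the exponential Euler step U^{n+1} = e^{hA}U^n + h φ₁(hA) B U^n. Then the error after n steps is U(nh) − Uⁿ = e^{nhA}(e^{nhB} − (id + hC(hA))ⁿ)U⁰ with C(hA) = φ₁(−hA)B. Moreover, for h = π/k and n = k one has C(hA) e_k = −(2i/π) λ_k e_k, and hence (id + hC(hA))ⁿ e_k = (e^{−2iλ_k} + O(h)) e_k as k → ∞. -/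
/-! Everything acts on `e` by scalars, so one step of the scheme multiplies by
`exp (h z) + h φ₁(h z) λ = exp (h z) (1 + h φ₁(-h z) λ)`, because `φ₁(t) = eᵗ φ₁(-t)`;
for `h z = iπ` one gets `φ₁(-iπ) = -2i/π`. The rate `(1 + c/n)ⁿ - eᶜ = O(1/n)` comes from
telescoping `aⁿ - bⁿ` with `a = 1 + c/n`, `b = e^{c/n}`, both of norm at most `e^{‖c‖/n}`,
and `‖a - b‖ ≤ ‖c/n‖² e^{‖c‖/n}`. -/

open Complex

/-- `φ₁(z) = (e^z − 1)/z`. -/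
noncomputable def phi1 (z : ℂ) : ℂ := (Complex.exp z - 1) / z

theorem norm_pow_sub_pow_le {R : Type*} [SeminormedRing R] [NormOneClass R] {a b : R} {M : ℝ}
    (ha : ‖a‖ ≤ M) (hb : ‖b‖ ≤ M) (n : ℕ) :
    ‖a ^ n - b ^ n‖ ≤ n * M ^ (n - 1) * ‖a - b‖ := by
  have hM : 0 ≤ M := (norm_nonneg a).trans ha
  induction n with
  | zero => simp
  | succ n ih =>
    have hbn : ‖b ^ n‖ ≤ M ^ n :=
      (norm_pow_le b n).trans (pow_le_pow_left₀ (norm_nonneg b) hb n)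
    have hsplit : a ^ (n + 1) - b ^ (n + 1) = a * (a ^ n - b ^ n) + (a - b) * b ^ n := by
      rw [pow_succ', pow_succ']; noncomm_ring
    have hpow : M * M ^ (n - 1) * n = M ^ n * n := by
      rcases n with _ | n
      · simp
      · rw [Nat.add_sub_cancel, ← pow_succ']
    calc ‖a ^ (n + 1) - b ^ (n + 1)‖
        ≤ ‖a‖ * ‖a ^ n - b ^ n‖ + ‖a - b‖ * ‖b ^ n‖ := by
          rw [hsplit]
          exact (norm_add_le _ _).trans (add_le_add (norm_mul_le _ _) (norm_mul_le _ _))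
      _ ≤ M * (n * M ^ (n - 1) * ‖a - b‖) + ‖a - b‖ * M ^ n := by gcongr
      _ = (n + 1 : ℕ) * M ^ (n + 1 - 1) * ‖a - b‖ := by
          rw [Nat.add_sub_cancel]; push_cast; linear_combination ‖a - b‖ * hpow

theorem norm_one_add_div_pow_sub_exp_le (c : ℂ) {n : ℕ} (hn : n ≠ 0) :
    ‖(1 + c / n) ^ n - Complex.exp c‖ ≤ ‖c‖ ^ 2 * Real.exp ‖c‖ / n := by
  have hn' : (0 : ℝ) < n := by positivity
  set w : ℂ := c / n
  have hw : ‖w‖ = ‖c‖ / n := by simp [w]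
  have hexp_w : Complex.exp w ^ n = Complex.exp c := by
    rw [← Complex.exp_nat_mul]; exact congrArg _ (mul_div_cancel₀ c (by exact_mod_cast hn))
  have hexp_norm_w : Real.exp ‖w‖ ^ n = Real.exp ‖c‖ := by
    rw [← Real.exp_nat_mul, hw]; congr 1; field_simp
  have hone_add : ‖1 + w‖ ≤ Real.exp ‖w‖ :=
    (norm_add_le _ _).trans (by simpa [add_comm] using Real.add_one_le_exp ‖w‖)
  have hstep : ‖1 + w - Complex.exp w‖ ≤ ‖w‖ ^ 2 * Real.exp ‖w‖ := by
    simpa [norm_sub_rev, Finset.sum_range_succ] using norm_exp_sub_sum_le_norm_mul_exp w 2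
  calc ‖(1 + w) ^ n - Complex.exp c‖
      ≤ n * Real.exp ‖w‖ ^ (n - 1) * ‖1 + w - Complex.exp w‖ := by
        rw [← hexp_w]
        exact norm_pow_sub_pow_le hone_add (norm_exp_le_exp_norm w) n
    _ ≤ n * Real.exp ‖w‖ ^ (n - 1) * (‖w‖ ^ 2 * Real.exp ‖w‖) := by gcongr
    _ = n * (Real.exp ‖w‖ ^ (n - 1) * Real.exp ‖w‖) * ‖w‖ ^ 2 := by ring
    _ = ‖c‖ ^ 2 * Real.exp ‖c‖ / n := by
        rw [← pow_succ, Nat.sub_add_cancel (Nat.one_le_iff_ne_zero.mpr hn), hexp_norm_w, hw]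
        field_simp

theorem phi1_eq_exp_mul_phi1_neg (t : ℂ) : phi1 t = Complex.exp t * phi1 (-t) := by
  rcases eq_or_ne t 0 with rfl | ht
  · simp [phi1]
  · unfold phi1
    rw [Complex.exp_neg]
    field_simp [Complex.exp_ne_zero t]
    ring

theorem phi1_neg_pi_mul_I : phi1 (-((Real.pi : ℂ) * Complex.I)) = -(2 * Complex.I / Real.pi) := by
  have hpi : (Real.pi : ℂ) ≠ 0 := Complex.ofReal_ne_zero.mpr Real.pi_ne_zero
  unfold phi1
  rw [Complex.exp_neg, Complex.exp_pi_mul_I]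
  field_simp
  ring_nf
  simp [Complex.I_sq]

theorem eq_pow_smul_of_succ_eq_smul {R M : Type*} [Monoid R] [MulAction R M] {u : ℕ → M} {a : R}
    (hu : ∀ n, u (n + 1) = a • u n) (n : ℕ) : u n = a ^ n • u 0 := by
  induction n with
  | zero => simp
  | succ n ih => rw [hu, ih, smul_smul, pow_succ']

theorem stmt13_general {Y : Type*} [NormedAddCommGroup Y] [NormedSpace ℂ Y]
    (e : Y) (k : ℕ) (hk : 1 ≤ k) (lam : ℂ)
    (h z : ℂ) (hh : h = (Real.pi : ℂ) / k) (hz : z = Complex.I * k)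
    (Uex Unum : ℕ → Y)
    (hUex : ∀ n : ℕ, Uex n = Complex.exp (n * h * (z + lam)) • e)
    (hU0 : Unum 0 = e)
    (hrec : ∀ n : ℕ,
      Unum (n + 1) = Complex.exp (h * z) • Unum n + (h * phi1 (h * z) * lam) • Unum n)
    (Ch : ℂ) (hCh : Ch = phi1 (-(h * z)) * lam) :
    (∀ n : ℕ, Uex n - Unum n
        = (Complex.exp (n * h * z) * (Complex.exp (n * h * lam) - (1 + h * Ch) ^ n)) • e)
    ∧ Ch = -(2 * Complex.I / (Real.pi : ℂ)) * lam
    ∧ (∃ K : ℝ, ∀ k' : ℕ, 1 ≤ k' →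
        ‖(1 + ((Real.pi : ℂ) / k') * (-(2 * Complex.I / (Real.pi : ℂ)) * lam)) ^ k'
            - Complex.exp (-(2 * Complex.I) * lam)‖ ≤ K / k') := by
  have hhz : h * z = Real.pi * Complex.I := by
    have : (k : ℂ) ≠ 0 := by exact_mod_cast Nat.one_le_iff_ne_zero.mp hk
    rw [hh, hz]; field_simp
  have hstep : ∀ n, Unum (n + 1) = (Complex.exp (h * z) * (1 + h * Ch)) • Unum n := fun n => by
    rw [hrec, ← add_smul, hCh, phi1_eq_exp_mul_phi1_neg]; ring_nf
  refine ⟨fun n => ?_, by rw [hCh, hhz, phi1_neg_pi_mul_I], ?_⟩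
  · rw [hUex, eq_pow_smul_of_succ_eq_smul hstep, hU0, ← sub_smul, mul_pow, ← Complex.exp_nat_mul,
      mul_add, Complex.exp_add, ← mul_assoc]
    ring_nf
  · have hbase (k' : ℕ) : 1 + ((Real.pi : ℂ) / k') * (-(2 * Complex.I / (Real.pi : ℂ)) * lam)
        = 1 + -(2 * Complex.I) * lam / k' := by
      have hpi : (Real.pi : ℂ) ≠ 0 := Complex.ofReal_ne_zero.mpr Real.pi_ne_zero
      field_simp
    exact ⟨_, fun k' hk' =>
      hbase k' ▸ norm_one_add_div_pow_sub_exp_le _ (Nat.one_le_iff_ne_zero.mp hk')⟩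

theorem stmt13 {Y : Type*} [NormedAddCommGroup Y] [NormedSpace ℂ Y]
    (e : Y) (he : ‖e‖ = 1) (k : ℕ) (hk : 1 ≤ k) (lam : ℂ)
    (h z : ℂ) (hh : h = (Real.pi : ℂ) / k) (hz : z = Complex.I * k)
    (Uex Unum : ℕ → Y)
    (hUex : ∀ n : ℕ, Uex n = Complex.exp (n * h * (z + lam)) • e)
    (hU0 : Unum 0 = e)
    (hrec : ∀ n : ℕ,
      Unum (n + 1) = Complex.exp (h * z) • Unum n + (h * phi1 (h * z) * lam) • Unum n)
    (Ch : ℂ) (hCh : Ch = phi1 (-(h * z)) * lam) :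
    (∀ n : ℕ, Uex n - Unum n
        = (Complex.exp (n * h * z) * (Complex.exp (n * h * lam) - (1 + h * Ch) ^ n)) • e)
    ∧ Ch = -(2 * Complex.I / (Real.pi : ℂ)) * lam
    ∧ (∃ K : ℝ, ∀ k' : ℕ, 1 ≤ k' →
        ‖(1 + ((Real.pi : ℂ) / k') * (-(2 * Complex.I / (Real.pi : ℂ)) * lam)) ^ k'
            - Complex.exp (-(2 * Complex.I) * lam)‖ ≤ K / k') :=
  stmt13_general e k hk lam h z hh hz Uex Unum hUex hU0 hrec Ch hCh
end
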